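/- The group of isometries of (V_n, χ_n) is abelian: if φ and ψ are linear automorphisms of V_n satisfying χ_n(φf, φg) = χ_n(f, g) and χ_n(ψf, ψg) = χ_n(f, g) for all f, g ∈ V_n, then φ ∘ ψ = ψ ∘ φ. -/

import Mathlib

open Polynomial

/-- `V n`: the real vector space of polynomials in `ℝ[t]` of degree at most `n`. -/
noncomputable def V (n : ℕ) : Submodule ℝ ℝ[X] := Polynomial.degreeLT ℝ (n + 1)

/-- Differentiation `D : V_n → V_n`. -/
noncomputable def Dop (n : ℕ) : Module.End ℝ (V n) :=
  (Polynomial.derivative (R := ℝ)).restrict (p := V n) (q := V n) fun p hp => by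
    rw [V, Polynomial.mem_degreeLT] at hp ⊢
    exact lt_of_le_of_lt Polynomial.degree_derivative_le hp

/-- `γ_m(t) = (t+1)(t+2)⋯(t+m)/m!`. -/
noncomputable def gam (m : ℕ) : ℝ[X] :=
  Polynomial.C ((m.factorial : ℝ))⁻¹ *
    ∏ i ∈ Finset.range m, (Polynomial.X + Polynomial.C (i + 1 : ℝ))

/-- `χ` is the Euler form: the (unique) bilinear form on `V n` with
`χ(γ_n(t+i), γ_n(t+j)) = C(n+j-i, n)` for `0 ≤ i, j ≤ n` (binomial coefficient,
equal to `0` when `n+j-i < n`). -/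
def EulerCond (n : ℕ) (χ : ↥(V n) →ₗ[ℝ] ↥(V n) →ₗ[ℝ] ℝ) : Prop :=
  ∀ (i j : Fin (n + 1)) (f g : V n),
    (f : ℝ[X]) = (gam n).comp (Polynomial.X + Polynomial.C ((i : ℕ) : ℝ)) →
    (g : ℝ[X]) = (gam n).comp (Polynomial.X + Polynomial.C ((j : ℕ) : ℝ)) →
    χ f g = ((n + (j : ℕ) - (i : ℕ)).choose n : ℝ)

-- auxiliary development

lemma gam_natDegree (m : ℕ) : (gam m).natDegree = m := by
  rw [gam]
  have hm : ((m.factorial : ℝ))⁻¹ ≠ 0 := by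
    simp [Nat.factorial_ne_zero]
  have hmon : (∏ i ∈ Finset.range m, (X + Polynomial.C (i + 1 : ℝ))).Monic :=
    monic_prod_of_monic _ _ fun i _ => monic_X_add_C _
  rw [natDegree_C_mul hm, natDegree_prod_of_monic _ _ fun i _ => monic_X_add_C _]
  simp only [natDegree_X_add_C]
  simp

lemma gam_eval (m : ℕ) (x : ℝ) :
    (gam m).eval x = ((m.factorial : ℝ))⁻¹ * ∏ i ∈ Finset.range m, (x + (i + 1)) := by
  simp [gam, eval_prod]

lemma gam_ne_zero (m : ℕ) : gam m ≠ 0 := by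
  have := gam_eval m m
  intro h
  rw [h] at this
  simp only [eval_zero] at this
  have h2 : ∀ i ∈ Finset.range m, ((m:ℝ) + (i+1)) ≠ 0 := by
    intro i _
    positivity
  have hp := Finset.prod_ne_zero_iff.2 h2
  have hm : ((m.factorial : ℝ))⁻¹ ≠ 0 := by simp [Nat.factorial_ne_zero]
  exact (mul_ne_zero hm hp) this.symm

lemma mem_V_of_natDegree_le {n : ℕ} {p : ℝ[X]} (h : p.natDegree ≤ n) : p ∈ V n := by
  rw [V, mem_degreeLT]
  exact lt_of_le_of_lt degree_le_natDegree (by exact_mod_cast Nat.lt_succ_of_le h)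

lemma taylor_mem_V {n : ℕ} (r : ℝ) {p : ℝ[X]} (hp : p ∈ V n) : taylor r p ∈ V n := by
  rcases eq_or_ne p 0 with rfl | h
  · simpa using hp
  · rw [V, mem_degreeLT] at hp ⊢
    rwa [degree_eq_natDegree (fun h0 => h (taylor_injective r (by simpa using h0))),
      natDegree_taylor, ← degree_eq_natDegree h]

/-- translation operator `p(t) ↦ p(t + r)` on `V n` -/
noncomputable def Tr (n : ℕ) (r : ℝ) : Module.End ℝ (V n) :=
  (taylor r).restrict (p := V n) (q := V n) fun _ hp => taylor_mem_V r hp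

lemma Tr_coe {n : ℕ} (r : ℝ) (w : V n) : ((Tr n r w : V n) : ℝ[X]) = taylor r (w : ℝ[X]) := rfl

/-- the basis elements `γ_n(t+i)` -/
noncomputable def ee (n : ℕ) (i : Fin (n+1)) : V n :=
  ⟨(gam n).comp (X + C ((i : ℕ) : ℝ)), by
    apply mem_V_of_natDegree_le
    rw [← taylor_apply, natDegree_taylor, gam_natDegree]⟩

lemma ee_coe (n : ℕ) (i : Fin (n+1)) :
    ((ee n i : V n) : ℝ[X]) = (gam n).comp (X + C ((i : ℕ) : ℝ)) := rfl

lemma ee_eval (n : ℕ) (i : Fin (n+1)) (x : ℝ) :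
    ((ee n i : V n) : ℝ[X]).eval x = (gam n).eval (x + (i : ℕ)) := by
  rw [ee_coe, eval_comp]; simp

lemma finrank_V (n : ℕ) : Module.finrank ℝ (V n) = n + 1 := by
  rw [V]
  rw [(Polynomial.degreeLTEquiv ℝ (n+1)).finrank_eq]
  simp

/-- triangular independence criterion -/
lemma tri_indep {n : ℕ} {M : Type*} [AddCommGroup M] [Module ℝ M]
    (v : Fin (n+1) → M) (L : Fin (n+1) → (M →ₗ[ℝ] ℝ))
    (hdiag : ∀ k, L k (v k) ≠ 0) (hzero : ∀ k j, j < k → L k (v j) = 0) :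
    LinearIndependent ℝ v := by
  rw [linearIndependent_iff']
  intro s g hsum i hi
  by_contra hgi
  have htne : (s.filter (fun j => g j ≠ 0)).Nonempty := ⟨i, Finset.mem_filter.2 ⟨hi, hgi⟩⟩
  set t := s.filter (fun j => g j ≠ 0) with ht
  set i0 := t.max' htne with hi0
  have hi0t : i0 ∈ t := t.max'_mem htne
  have hi0s : i0 ∈ s := (Finset.mem_filter.1 hi0t).1
  have hgne : g i0 ≠ 0 := (Finset.mem_filter.1 hi0t).2
  have h0 : (L i0) (∑ j ∈ s, g j • v j) = 0 := by rw [hsum]; simp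
  rw [map_sum] at h0
  simp only [map_smul, smul_eq_mul] at h0
  rw [Finset.sum_eq_single_of_mem i0 hi0s] at h0
  · exact (mul_ne_zero hgne (hdiag i0)) h0
  · intro j hj hne
    rcases eq_or_ne (g j) 0 with h | h
    · rw [h, zero_mul]
    · have hjt : j ∈ t := Finset.mem_filter.2 ⟨hj, h⟩
      have : j < i0 := lt_of_le_of_ne (t.le_max' j hjt) hne
      rw [hzero i0 j this, mul_zero]

lemma gam_eval_zero_of (n d : ℕ) (hd1 : 1 ≤ d) (hdn : d ≤ n) :
    (gam n).eval (-(d : ℝ)) = 0 := by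
  rw [gam_eval]
  apply mul_eq_zero_of_right
  apply Finset.prod_eq_zero (i := d - 1) (by simp; omega)
  have : ((d - 1 : ℕ) : ℝ) = (d : ℝ) - 1 := by
    push_cast [Nat.cast_sub hd1]; ring
  rw [this]; ring

lemma gam_eval_zero' (n : ℕ) : (gam n).eval 0 = 1 := by
  rw [gam_eval]
  have : ∏ i ∈ Finset.range n, ((0:ℝ) + ((i:ℝ) + 1)) = (n.factorial : ℝ) := by
    rw [← Finset.prod_range_add_one_eq_factorial]
    push_cast
    apply Finset.prod_congr rfl
    intro r _
    ring
  rw [this]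
  field_simp [Nat.factorial_ne_zero]

lemma prod_asc (d n : ℕ) : (∏ r ∈ Finset.range n, (d + 1 + r)) = (d+1).ascFactorial n := by
  induction n with
  | zero => simp
  | succ k ih => rw [Finset.prod_range_succ, ih, Nat.ascFactorial_succ, mul_comm]

/-- the heart: `C(n+j-i, n) = γ_n(j - i)` for `i ≤ n`. -/
lemma heart (n i j : ℕ) (hi : i ≤ n) :
    ((n + j - i).choose n : ℝ) = (gam n).eval ((j : ℝ) - (i : ℝ)) := by
  rw [gam_eval]
  rcases le_or_gt i j with h | h
  · set d := j - i with hd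
    have hj : (j : ℝ) - (i : ℝ) = (d : ℝ) := by rw [hd, Nat.cast_sub h]
    have hnat : n + j - i = d + n := by omega
    rw [hj, hnat]
    have : ∏ r ∈ Finset.range n, ((d:ℝ) + ((r:ℝ) + 1)) =
        (((d+1).ascFactorial n : ℕ) : ℝ) := by
      rw [← prod_asc, Nat.cast_prod]
      apply Finset.prod_congr rfl
      intro r _
      push_cast; ring
    rw [this, Nat.ascFactorial_eq_factorial_mul_choose]
    push_cast
    field_simp [Nat.factorial_ne_zero]
    try ring
  · set d := i - j with hd
    have hd1 : 1 ≤ d := by omega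
    have hdn : d ≤ n := by omega
    have hchoose : (n + j - i).choose n = 0 := by
      apply Nat.choose_eq_zero_of_lt; omega
    rw [hchoose]
    have : ∏ r ∈ Finset.range n, ((j:ℝ) - (i:ℝ) + ((r:ℝ) + 1)) = 0 := by
      apply Finset.prod_eq_zero (i := d - 1) (by simp; omega)
      have : ((d - 1 : ℕ) : ℝ) = (i : ℝ) - (j : ℝ) - 1 := by
        rw [Nat.cast_sub hd1, hd, Nat.cast_sub h.le]; push_cast; ring
      rw [this]; ring
    rw [this, mul_zero]
    simp

lemma ee_indep (n : ℕ) : LinearIndependent ℝ (ee n) := by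
  apply tri_indep (L := fun k => (Polynomial.leval (-(k : ℕ) : ℝ)).comp (V n).subtype)
  · intro k
    simp only [LinearMap.comp_apply, Submodule.coe_subtype, leval_apply]
    rw [ee_eval]
    norm_num [gam_eval_zero']
  · intro k j hjk
    simp only [LinearMap.comp_apply, Submodule.coe_subtype, leval_apply]
    rw [ee_eval]
    have h1 : (-(k:ℕ) + ((j:ℕ):ℝ)) = -(((k:ℕ) - (j:ℕ) : ℕ) : ℝ) := by
      have : (j:ℕ) ≤ (k:ℕ) := le_of_lt hjk
      push_cast [Nat.cast_sub this]; ring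
    rw [h1]
    apply gam_eval_zero_of
    · omega
    · have := k.isLt; omega

noncomputable def basisE (n : ℕ) : Module.Basis (Fin (n+1)) ℝ (V n) :=
  basisOfLinearIndependentOfCardEqFinrank (ee_indep n) (by simp [finrank_V])

lemma basisE_apply (n : ℕ) (i : Fin (n+1)) : basisE n i = ee n i := by
  rw [basisE, coe_basisOfLinearIndependentOfCardEqFinrank]

section Chi
variable {n : ℕ} {χ : ↥(V n) →ₗ[ℝ] ↥(V n) →ₗ[ℝ] ℝ}

def EulerCond' (n : ℕ) (χ : ↥(V n) →ₗ[ℝ] ↥(V n) →ₗ[ℝ] ℝ) : Prop :=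
  ∀ (i j : Fin (n + 1)) (f g : V n),
    (f : ℝ[X]) = (gam n).comp (Polynomial.X + Polynomial.C ((i : ℕ) : ℝ)) →
    (g : ℝ[X]) = (gam n).comp (Polynomial.X + Polynomial.C ((j : ℕ) : ℝ)) →
    χ f g = ((n + (j : ℕ) - (i : ℕ)).choose n : ℝ)

lemma chi_ee (hχ : EulerCond' n χ) (i j : Fin (n+1)) :
    χ (ee n i) (ee n j) = ((n + (j:ℕ) - (i:ℕ)).choose n : ℝ) :=
  hχ i j _ _ rfl rfl

/-- Key formula : `χ(γ_n(t+i), w) = w(-i)`. -/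
lemma chi_eval (hχ : EulerCond' n χ) (i : Fin (n+1)) (w : V n) :
    χ (ee n i) w = Polynomial.eval (-((i:ℕ) : ℝ)) (w : ℝ[X]) := by
  have : χ (ee n i) = (Polynomial.leval (-((i:ℕ) : ℝ))).comp (V n).subtype := by
    apply (basisE n).ext
    intro j
    rw [basisE_apply]
    simp only [LinearMap.comp_apply, Submodule.coe_subtype, leval_apply]
    rw [ee_eval, chi_ee hχ, heart n i j (by have := i.isLt; omega : (i:ℕ) ≤ n)]
    congr 1
    ring
  rw [this]
  rfl

lemma chi_nondeg (hχ : EulerCond' n χ) (w : V n)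
    (h : ∀ i : Fin (n+1), χ (ee n i) w = 0) : w = 0 := by
  have hev : ∀ i : Fin (n+1), Polynomial.eval (-((i:ℕ) : ℝ)) (w : ℝ[X]) = 0 := by
    intro i; rw [← chi_eval hχ, h]
  have hw : (w : ℝ[X]) = 0 := by
    rcases eq_or_ne (w : ℝ[X]) 0 with h0 | h0
    · exact h0
    · apply Polynomial.eq_zero_of_natDegree_lt_card_of_eval_eq_zero _
        (f := fun i : Fin (n+1) => (-((i:ℕ) : ℝ)))
      · intro a b hab
        simp only [neg_inj, Nat.cast_inj] at hab
        exact Fin.ext hab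
      · exact hev
      · rw [Fintype.card_fin]
        have hmem : (w : ℝ[X]) ∈ Polynomial.degreeLT ℝ (n+1) := w.2
        rw [mem_degreeLT, degree_eq_natDegree h0] at hmem
        exact_mod_cast hmem
  exact Subtype.ext hw

lemma serre_num (n : ℕ) (x : ℝ) :
    (-1:ℝ)^n * (gam n).eval (-x - (n+1)) = (gam n).eval x := by
  rw [gam_eval, gam_eval]
  have h1 : ∏ r ∈ Finset.range n, (-x - ((n:ℝ)+1) + ((r:ℝ) + 1)) =
      ∏ r ∈ Finset.range n, (-(x + ((r:ℝ) + 1))) := by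
    rw [← Finset.prod_range_reflect (fun r => (-x - ((n:ℝ)+1) + ((r:ℝ) + 1)))]
    apply Finset.prod_congr rfl
    intro r hr
    rw [Finset.mem_range] at hr
    have e : ((n - 1 - r : ℕ) : ℝ) = ((n:ℝ) - 1) - (r:ℝ) := by
      rw [Nat.cast_sub (by omega), Nat.cast_sub (by omega)]
      push_cast; ring
    rw [e]; ring
  rw [h1]
  have h2 : ∏ r ∈ Finset.range n, (-(x + ((r:ℝ) + 1))) =
      (-1:ℝ)^n * ∏ r ∈ Finset.range n, (x + ((r:ℝ) + 1)) := by
    rw [show (fun r : ℕ => (-(x + ((r:ℝ) + 1)))) = (fun r : ℕ => (-1:ℝ) * (x + ((r:ℝ) + 1))) from funext fun r => by ring]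
    rw [Finset.prod_mul_distrib, Finset.prod_const, Finset.card_range]
  rw [h2]
  have h3 : (-1:ℝ)^n * ((n.factorial:ℝ))⁻¹ * ((-1:ℝ)^n * ∏ r ∈ Finset.range n, (x + ((r:ℝ) + 1)))
      = ((-1:ℝ)^n * (-1:ℝ)^n) * (((n.factorial:ℝ))⁻¹ * ∏ r ∈ Finset.range n, (x + ((r:ℝ) + 1))) := by
    ring
  rw [mul_assoc] at *
  calc (-1:ℝ)^n * (((n.factorial:ℝ))⁻¹ * ((-1:ℝ)^n * ∏ r ∈ Finset.range n, (x + ((r:ℝ) + 1))))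
      = ((-1:ℝ)^n * (-1:ℝ)^n) * (((n.factorial:ℝ))⁻¹ * ∏ r ∈ Finset.range n, (x + ((r:ℝ) + 1))) := by ring
    _ = ((n.factorial:ℝ))⁻¹ * ∏ r ∈ Finset.range n, (x + ((r:ℝ) + 1)) := by
        rw [← mul_pow]; norm_num

lemma serre (hχ : EulerCond' n χ) (f g : V n) :
    χ g f = (-1:ℝ)^n * χ f (Tr n (-((n:ℝ)+1)) g) := by
  have hmaps : χ.flip = ((-1:ℝ)^n) • (χ.compl₂ (Tr n (-((n:ℝ)+1)))) := by
    apply LinearMap.ext_basis (basisE n) (basisE n)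
    intro i j
    rw [basisE_apply, basisE_apply]
    simp only [LinearMap.flip_apply, LinearMap.smul_apply, LinearMap.compl₂_apply,
      smul_eq_mul]
    rw [chi_ee hχ, chi_eval hχ]
    have hco : ((Tr n (-((n:ℝ)+1)) (ee n j) : V n) : ℝ[X]) =
        taylor (-((n:ℝ)+1)) ((ee n j : V n) : ℝ[X]) := rfl
    rw [hco, taylor_eval, ee_eval]
    have harg : (-((i:ℕ):ℝ) + -((n:ℝ)+1) + ((j:ℕ):ℝ)) =
        -(((i:ℕ):ℝ) - ((j:ℕ):ℝ)) - ((n:ℝ)+1) := by ring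
    rw [harg, serre_num n (((i:ℕ):ℝ) - ((j:ℕ):ℝ))]
    rw [heart n j i (by have := j.isLt; omega : (j:ℕ) ≤ n)]
  have := LinearMap.congr_fun (LinearMap.congr_fun hmaps f) g
  simpa using this

lemma comm_Tr (hχ : EulerCond' n χ) (φ : ↥(V n) ≃ₗ[ℝ] ↥(V n))
    (hφ : ∀ f g : V n, χ (φ f) (φ g) = χ f g) (g : V n) :
    Tr n (-((n:ℝ)+1)) (φ g) = φ (Tr n (-((n:ℝ)+1)) g) := by
  set T := Tr n (-((n:ℝ)+1))
  rw [← sub_eq_zero]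
  apply chi_nondeg hχ
  intro i
  set f := φ.symm (ee n i) with hf
  have hfe : ee n i = φ f := by rw [hf, LinearEquiv.apply_symm_apply]
  rw [hfe, map_sub]
  have h1 : χ (φ f) (T (φ g)) = χ f (T g) := by
    have e1 : χ (φ g) (φ f) = (-1:ℝ)^n * χ (φ f) (T (φ g)) := serre hχ (φ f) (φ g)
    have e2 : χ g f = (-1:ℝ)^n * χ f (T g) := serre hχ f g
    rw [hφ g f] at e1
    rw [e2] at e1
    have hne : ((-1:ℝ)^n) ≠ 0 := by positivity
    exact (mul_left_cancel₀ hne e1).symm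
  rw [h1, hφ f (T g), sub_self]

end Chi

lemma hasse_top {p : ℝ[X]} {m : ℕ} (hm : p.natDegree ≤ m) :
    hasseDeriv m p = C (p.coeff m) := by
  ext k
  rw [hasseDeriv_coeff, coeff_C]
  rcases eq_or_ne k 0 with rfl | hk
  · simp
  · have : m < k + m := by omega
    rw [coeff_eq_zero_of_natDegree_lt (lt_of_le_of_lt hm this)]
    simp [hk]

lemma hasse_subtop {p : ℝ[X]} {m : ℕ} (hm : p.natDegree ≤ m + 1) :
    hasseDeriv m p = C (p.coeff m) + C ((m+1 : ℕ) * p.coeff (m+1)) * X := by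
  ext k
  rw [hasseDeriv_coeff]
  match k with
  | 0 => simp
  | 1 =>
    simp only [coeff_add, coeff_C, coeff_C_mul, coeff_X_one, one_ne_zero, if_false, mul_one]
    rw [show 1 + m = m + 1 by omega, Nat.choose_succ_self_right]
    simp
  | (k+2) =>
    have h1 : m + 1 < k + 2 + m := by omega
    rw [coeff_eq_zero_of_natDegree_lt (lt_of_le_of_lt hm h1)]
    simp only [mul_zero, coeff_add, coeff_C, coeff_C_mul, coeff_X]
    norm_num

/-- the finite-difference step: degree drops by exactly one. -/
lemma step {c : ℝ} (hc : c ≠ 0) {p : ℝ[X]} {m : ℕ} (hm : p.natDegree = m + 1) :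
    (taylor c p - p).natDegree = m ∧ (taylor c p - p).coeff m ≠ 0 := by
  have hp0 : p ≠ 0 := fun h => by simp [h] at hm
  have hlead : p.coeff (m+1) ≠ 0 := by
    rw [← hm]; exact leadingCoeff_ne_zero.2 hp0
  have hcm : (taylor c p - p).coeff m = ((m+1 : ℕ) : ℝ) * p.coeff (m+1) * c := by
    rw [coeff_sub, taylor_coeff, hasse_subtop (le_of_eq hm)]
    simp only [eval_add, eval_C, eval_mul, eval_X]
    push_cast
    ring
  have hne : (taylor c p - p).coeff m ≠ 0 := by
    rw [hcm]
    apply mul_ne_zero (mul_ne_zero _ hlead) hc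
    positivity
  constructor
  · apply le_antisymm
    · rw [natDegree_le_iff_coeff_eq_zero]
      intro d hd
      rcases eq_or_lt_of_le (by omega : m + 1 ≤ d) with rfl | hd2
      · rw [coeff_sub, taylor_coeff, hasse_top (le_of_eq hm)]
        simp [sub_eq_zero]
      · rw [coeff_sub,
          coeff_eq_zero_of_natDegree_lt (by rw [natDegree_taylor, hm]; exact hd2),
          coeff_eq_zero_of_natDegree_lt (by rw [hm]; exact hd2), sub_zero]
    · exact le_natDegree_of_ne_zero hne
  · exact hne

/-- the nilpotent difference operator `N = T - 1` -/
noncomputable def NN (n : ℕ) : Module.End ℝ (V n) := Tr n (-((n:ℝ)+1)) - 1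

lemma NN_coe {n : ℕ} (w : V n) :
    ((NN n w : V n) : ℝ[X]) = taylor (-((n:ℝ)+1)) (w : ℝ[X]) - (w : ℝ[X]) := by
  rw [NN, LinearMap.sub_apply, Module.End.one_apply, Submodule.coe_sub, Tr_coe]

noncomputable def vtop (n : ℕ) : V n :=
  ⟨X ^ n, mem_V_of_natDegree_le (by simp)⟩

lemma chain (n : ℕ) : ∀ k, k ≤ n →
    ((((NN n)^k) (vtop n) : ℝ[X])).natDegree = n - k ∧
    ((((NN n)^k) (vtop n) : ℝ[X])).coeff (n - k) ≠ 0 := by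
  intro k
  induction k with
  | zero =>
    intro _
    simp only [pow_zero, Module.End.one_apply, Nat.sub_zero]
    constructor
    · exact natDegree_X_pow n
    · rw [show ((vtop n : V n) : ℝ[X]) = X ^ n from rfl, coeff_X_pow]
      simp
  | succ k ih =>
    intro hk
    have ⟨h1, h2⟩ := ih (by omega)
    have hc : (-((n:ℝ)+1)) ≠ 0 := by
      have : (0:ℝ) < (n:ℝ) + 1 := by positivity
      linarith
    have hco : ((((NN n)^(k+1)) (vtop n) : V n) : ℝ[X]) =
        taylor (-((n:ℝ)+1)) ((((NN n)^k) (vtop n) : V n) : ℝ[X]) -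
          ((((NN n)^k) (vtop n) : V n) : ℝ[X]) := by
      rw [pow_succ']
      rw [Module.End.mul_apply, NN_coe]
    have hm : ((((NN n)^k) (vtop n) : V n) : ℝ[X]).natDegree = (n - (k+1)) + 1 := by
      omega
    have := step hc hm
    rw [hco]
    exact this

noncomputable def wfam (n : ℕ) : Fin (n+1) → V n :=
  fun j => ((NN n)^(n - (j:ℕ))) (vtop n)

lemma wfam_indep (n : ℕ) : LinearIndependent ℝ (wfam n) := by
  apply tri_indep (L := fun k => (Polynomial.lcoeff ℝ (k:ℕ)).comp (V n).subtype)
  · intro k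
    have hk : (k:ℕ) ≤ n := by have := k.isLt; omega
    have := (chain n (n - (k:ℕ)) (by omega)).2
    simp only [LinearMap.comp_apply, Submodule.coe_subtype, lcoeff_apply]
    rw [wfam]
    rwa [show n - (n - (k:ℕ)) = (k:ℕ) by omega] at this
  · intro k j hjk
    have hj : (j:ℕ) ≤ n := by have := j.isLt; omega
    have := (chain n (n - (j:ℕ)) (by omega)).1
    simp only [LinearMap.comp_apply, Submodule.coe_subtype, lcoeff_apply]
    rw [wfam]
    apply coeff_eq_zero_of_natDegree_lt
    rw [this]
    omega

noncomputable def basisN (n : ℕ) : Module.Basis (Fin (n+1)) ℝ (V n) :=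
  basisOfLinearIndependentOfCardEqFinrank (wfam_indep n) (by simp [finrank_V])

lemma basisN_apply (n : ℕ) (j : Fin (n+1)) :
    basisN n j = ((NN n)^(n - (j:ℕ))) (vtop n) := by
  rw [basisN, coe_basisOfLinearIndependentOfCardEqFinrank]; rfl

section Final
variable {n : ℕ} {χ : ↥(V n) →ₗ[ℝ] ↥(V n) →ₗ[ℝ] ℝ}

lemma comm_NN_pow (hχ : EulerCond' n χ) (φ : ↥(V n) ≃ₗ[ℝ] ↥(V n))
    (hφ : ∀ f g : V n, χ (φ f) (φ g) = χ f g) (k : ℕ) (x : V n) :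
    ((NN n)^k) (φ x) = φ (((NN n)^k) x) := by
  induction k generalizing x with
  | zero => simp
  | succ k ih =>
    have h1 : (NN n) (φ x) = φ ((NN n) x) := by
      rw [NN, LinearMap.sub_apply, LinearMap.sub_apply, Module.End.one_apply,
        Module.End.one_apply, comm_Tr hχ φ hφ x, ← map_sub]
    rw [pow_succ, Module.End.mul_apply, Module.End.mul_apply, h1, ih]

lemma pow_pow_apply (n : ℕ) (a b : ℕ) (x : V n) :
    ((NN n)^a) (((NN n)^b) x) = ((NN n)^(a+b)) x := by
  rw [← Module.End.mul_apply, ← pow_add]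

lemma expand_apply (hχ : EulerCond' n χ) (α β : ↥(V n) ≃ₗ[ℝ] ↥(V n))
    (hα : ∀ f g : V n, χ (α f) (α g) = χ f g)
    (hβ : ∀ f g : V n, χ (β f) (β g) = χ f g) :
    α (β (vtop n)) = ∑ i : Fin (n+1), ∑ j : Fin (n+1),
      ((basisN n).repr (β (vtop n)) i) •
        ((basisN n).repr (α (vtop n)) j) •
          ((NN n)^((n - (i:ℕ)) + (n - (j:ℕ)))) (vtop n) := by
  conv_lhs => rw [← (basisN n).sum_repr (β (vtop n))]
  rw [map_sum]
  apply Finset.sum_congr rfl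
  intro i _
  rw [map_smul, ← Finset.smul_sum]
  congr 1
  rw [basisN_apply, ← comm_NN_pow hχ α hα]
  conv_lhs => rw [← (basisN n).sum_repr (α (vtop n))]
  rw [map_sum]
  apply Finset.sum_congr rfl
  intro j _
  rw [map_smul]
  congr 1
  rw [basisN_apply, pow_pow_apply]

theorem isometry_group_abelian' (hχ : EulerCond' n χ) (φ ψ : ↥(V n) ≃ₗ[ℝ] ↥(V n))
    (hφ : ∀ f g : V n, χ (φ f) (φ g) = χ f g)
    (hψ : ∀ f g : V n, χ (ψ f) (ψ g) = χ f g) :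
    φ * ψ = ψ * φ := by
  have key : φ (ψ (vtop n)) = ψ (φ (vtop n)) := by
    rw [expand_apply hχ φ ψ hφ hψ, expand_apply hχ ψ φ hψ hφ, Finset.sum_comm]
    apply Finset.sum_congr rfl
    intro i _
    apply Finset.sum_congr rfl
    intro j _
    rw [smul_comm, Nat.add_comm (n - (i:ℕ))]
  have hcomp : (φ.toLinearMap ∘ₗ ψ.toLinearMap) = (ψ.toLinearMap ∘ₗ φ.toLinearMap) := by
    apply (basisN n).ext
    intro j
    rw [basisN_apply]
    simp only [LinearMap.comp_apply, LinearEquiv.coe_coe]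
    rw [← comm_NN_pow hχ ψ hψ]
    conv_rhs => rw [← comm_NN_pow hχ φ hφ]
    rw [← comm_NN_pow hχ φ hφ, key]
    exact comm_NN_pow hχ ψ hψ _ _
  refine LinearEquiv.ext fun x => ?_
  have := LinearMap.congr_fun hcomp x
  simp only [LinearMap.comp_apply, LinearEquiv.coe_coe] at this
  exact this

end Final

/-- The isometry group of `(V_n, χ_n)` is abelian: if `φ`, `ψ` are linear automorphisms
of `V_n` preserving `χ_n`, then `φ ∘ ψ = ψ ∘ φ`. -/
theorem isometry_group_abelian (n : ℕ) (χ : ↥(V n) →ₗ[ℝ] ↥(V n) →ₗ[ℝ] ℝ)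
    (hχ : EulerCond n χ) (φ ψ : ↥(V n) ≃ₗ[ℝ] ↥(V n))
    (hφ : ∀ f g : V n, χ (φ f) (φ g) = χ f g)
    (hψ : ∀ f g : V n, χ (ψ f) (ψ g) = χ f g) :
    φ * ψ = ψ * φ := by
  exact isometry_group_abelian' hχ φ ψ hφ hψ
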